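/- For the error dynamics ė = −2RR^T e − 2R(L_o ⊗ I_d)p̄ of the orientation-controlled formation system, e(0) = 0 does not imply ė(0) = 0 in general: there exist an infinitesimally rigid framework configuration p with e(p) = 0 and orientation offset p̄ with (L_o ⊗ I_d)p̄ ≠ 0 such that R(p)(L_o ⊗ I_d)p̄ ≠ 0. -/

import Mathlib

/-!
Take the right triangle `(0,0), (1,0), (0,1)` with all three edges and their actual lengths as
targets, so `e = 0` and the rigidity matrix has full rank `3 = 2·3 - 3`. With the single
orientation edge `k₀ = (i, j)` one has `L_o w = (w j - w i) • H k₀`, hence the `k₀`-th entry of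
`R (L_o ⊗ I) p̄` is `2 z_{k₀} · (p̄_j - p̄_i)`. Choosing `p̂ = 0` makes this `2 ‖z_{k₀}‖² = 2`.
-/

open Matrix Kronecker

noncomputable section

namespace Formation

variable {n m : ℕ} {d : Type*} [Fintype d]

def incidenceMatrix (ends : Fin m → Fin n × Fin n) : Matrix (Fin m) (Fin n) ℝ :=
  fun k i => if i = (ends k).2 then 1 else if i = (ends k).1 then -1 else 0

def edgeVector (ends : Fin m → Fin n × Fin n) (q : Fin n × d → ℝ) : Fin m → d → ℝ :=
  fun k a => q ((ends k).2, a) - q ((ends k).1, a)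

def rigidityMatrix (ends : Fin m → Fin n × Fin n) (q : Fin n × d → ℝ) :
    Matrix (Fin m) (Fin n × d) ℝ :=
  fun k x => edgeVector ends q k x.2 * incidenceMatrix ends k x.1

def orientationIncidence (ends : Fin m → Fin n × Fin n) (Eo : Finset (Fin m)) :
    Matrix (Fin m) (Fin n) ℝ :=
  fun k i => if k ∈ Eo then incidenceMatrix ends k i else 0

def orientationLaplacian (ends : Fin m → Fin n × Fin n) (Eo : Finset (Fin m)) :
    Matrix (Fin n) (Fin n) ℝ :=
  (orientationIncidence ends Eo)ᵀ * orientationIncidence ends Eo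

theorem incidenceMatrix_mulVec_apply {ends : Fin m → Fin n × Fin n} {k : Fin m}
    (hk : (ends k).1 ≠ (ends k).2) (w : Fin n → ℝ) :
    (incidenceMatrix ends *ᵥ w) k = w (ends k).2 - w (ends k).1 := by
  simp [incidenceMatrix, mulVec, dotProduct, ite_mul, Finset.sum_ite, Finset.filter_eq',
    Finset.filter_ne', hk, sub_eq_add_neg]

theorem rigidityMatrix_mulVec_apply {ends : Fin m → Fin n × Fin n} {k : Fin m}
    (hk : (ends k).1 ≠ (ends k).2) (q v : Fin n × d → ℝ) :
    (rigidityMatrix ends q *ᵥ v) k =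
      ∑ a, edgeVector ends q k a * (v ((ends k).2, a) - v ((ends k).1, a)) := by
  have hrow (a : d) :
      ∑ i, incidenceMatrix ends k i * v (i, a) = v ((ends k).2, a) - v ((ends k).1, a) :=
    incidenceMatrix_mulVec_apply hk fun i => v (i, a)
  simp only [mulVec, dotProduct, rigidityMatrix, Fintype.sum_prod_type]
  rw [Finset.sum_comm]
  simp only [mul_assoc, ← Finset.mul_sum, hrow]

theorem kronecker_one_mulVec_apply {ι : Type*} [Fintype ι] [DecidableEq d]
    (L : Matrix ι ι ℝ) (v : ι × d → ℝ) (i : ι) (a : d) :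
    ((L ⊗ₖ (1 : Matrix d d ℝ)) *ᵥ v) (i, a) = (L *ᵥ fun j => v (j, a)) i := by
  simp [mulVec, dotProduct, kroneckerMap_apply, one_apply, Fintype.sum_prod_type]

theorem orientationLaplacian_singleton_mulVec {ends : Fin m → Fin n × Fin n} {k₀ : Fin m}
    (hk : (ends k₀).1 ≠ (ends k₀).2) (w : Fin n → ℝ) :
    orientationLaplacian ends {k₀} *ᵥ w =
      (w (ends k₀).2 - w (ends k₀).1) • incidenceMatrix ends k₀ := by
  have hHo : orientationIncidence ends {k₀} *ᵥ w =
      Pi.single k₀ (w (ends k₀).2 - w (ends k₀).1) := by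
    ext k
    by_cases h : k = k₀
    · subst h
      simp only [mulVec, orientationIncidence, Finset.mem_singleton, if_true, Pi.single_eq_same]
      exact incidenceMatrix_mulVec_apply hk w
    · simp [orientationIncidence, h, mulVec, dotProduct]
  rw [orientationLaplacian, ← mulVec_mulVec, hHo, mulVec_single]
  ext i
  simp [orientationIncidence, mul_comm]

theorem rigidityMatrix_mulVec_kronecker_orientationLaplacian_apply [DecidableEq d]
    {ends : Fin m → Fin n × Fin n} {k₀ : Fin m} (hk : (ends k₀).1 ≠ (ends k₀).2)
    (q pbar : Fin n × d → ℝ) :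
    (rigidityMatrix ends q *ᵥ (orientationLaplacian ends {k₀} ⊗ₖ (1 : Matrix d d ℝ)) *ᵥ pbar) k₀ =
      2 * ∑ a, edgeVector ends q k₀ a * (pbar ((ends k₀).2, a) - pbar ((ends k₀).1, a)) := by
  rw [rigidityMatrix_mulVec_apply hk, Finset.mul_sum]
  refine Finset.sum_congr rfl fun a _ => ?_
  simp only [kronecker_one_mulVec_apply, orientationLaplacian_singleton_mulVec hk,
    Pi.smul_apply, smul_eq_mul, incidenceMatrix, ↓reduceIte, hk, mul_one, mul_neg, neg_sub]
  ring

def triangleEnds : Fin 3 → Fin 3 × Fin 3 := ![(0, 1), (1, 2), (0, 2)]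

def triangle : Fin 3 × Fin 2 → ℝ := fun x => !![0, 0; 1, 0; 0, 1] x.1 x.2

theorem rank_rigidityMatrix_triangle : (rigidityMatrix triangleEnds triangle).rank = 3 := by
  refine le_antisymm
    (by simpa using rank_le_card_height (rigidityMatrix triangleEnds triangle)) ?_
  let cols : Fin 3 → Fin 3 × Fin 2 := ![(0, 0), (0, 1), (1, 0)]
  have hsub : (rigidityMatrix triangleEnds triangle).submatrix id cols =
      !![-1, 0, 1; 0, 0, 1; 0, -1, 0] := by
    ext i j
    fin_cases i <;> fin_cases j <;>
      simp [cols, rigidityMatrix, edgeVector, incidenceMatrix, triangleEnds, triangle]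
  have hunit : IsUnit (!![-1, 0, 1; 0, 0, 1; 0, -1, 0] : Matrix (Fin 3) (Fin 3) ℝ) := by
    simp [isUnit_iff_isUnit_det, det_fin_three]
  calc 3 = ((rigidityMatrix triangleEnds triangle).submatrix id cols).rank := by
        rw [hsub, rank_of_isUnit _ hunit, Fintype.card_fin]
    _ ≤ _ := rank_submatrix_le _ _ _

end Formation

open Formation in
/-- For the error dynamics `ė = −2RRᵀe − 2R(L_o ⊗ I_d)p̄`, `e = 0` does not imply
`ė = 0`: there is an infinitesimally rigid 2-D framework configuration `q` with
`e(q) = 0` and an orientation offset with `(L_o ⊗ I_d)p̄ ≠ 0` such that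
`R(q)(L_o ⊗ I_d)p̄ ≠ 0`. -/
theorem shape_lost_during_orientation_adjustment :
    ∃ (n m : ℕ) (ends : Fin m → Fin n × Fin n) (dd : Fin m → ℝ)
      (Eo : Finset (Fin m)) (phat q : Fin n × Fin 2 → ℝ)
      (H Ho : Matrix (Fin m) (Fin n) ℝ) (Lo : Matrix (Fin n) (Fin n) ℝ)
      (z : Fin m → Fin 2 → ℝ) (e : Fin m → ℝ)
      (R : Matrix (Fin m) (Fin n × Fin 2) ℝ) (pbar : Fin n × Fin 2 → ℝ),
      (∀ k, (ends k).1 ≠ (ends k).2) ∧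
      H = (fun k i => if i = (ends k).2 then 1 else if i = (ends k).1 then -1 else 0) ∧
      (∀ k a, z k a = q ((ends k).2, a) - q ((ends k).1, a)) ∧
      (∀ k, e k = (∑ a, (z k a) ^ 2) - (dd k) ^ 2) ∧
      R = (fun k x => z k x.2 * H k x.1) ∧
      Ho = (fun k i => if k ∈ Eo then H k i else 0) ∧
      Lo = Hoᵀ * Ho ∧
      (∀ x, pbar x =
        if ∃ k ∈ Eo, (ends k).1 = x.1 ∨ (ends k).2 = x.1 then q x - phat x else 0) ∧
      -- the framework is infinitesimally rigid and at the correct shape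
      R.rank = 2 * n - 3 ∧
      e = 0 ∧
      -- but the orientation control term is active and drives e away from zero
      (Lo ⊗ₖ (1 : Matrix (Fin 2) (Fin 2) ℝ)).mulVec pbar ≠ 0 ∧
      R.mulVec ((Lo ⊗ₖ (1 : Matrix (Fin 2) (Fin 2) ℝ)).mulVec pbar) ≠ 0 := by
  let z := edgeVector triangleEnds triangle
  let pbar : Fin 3 × Fin 2 → ℝ := fun x =>
    if ∃ k ∈ ({0} : Finset (Fin 3)), (triangleEnds k).1 = x.1 ∨ (triangleEnds k).2 = x.1
    then triangle x - 0 else 0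
  have hends : ∀ k, (triangleEnds k).1 ≠ (triangleEnds k).2 := by decide
  have hactive : rigidityMatrix triangleEnds triangle *ᵥ
      (orientationLaplacian triangleEnds {0} ⊗ₖ (1 : Matrix (Fin 2) (Fin 2) ℝ)) *ᵥ pbar ≠ 0 := by
    intro h
    have h0 := congrFun h 0
    rw [rigidityMatrix_mulVec_kronecker_orientationLaplacian_apply (hends 0)] at h0
    simp [pbar, edgeVector, triangleEnds, triangle, Fin.sum_univ_two] at h0
  refine ⟨3, 3, triangleEnds, fun k => √(∑ a, z k a ^ 2), {0}, 0, triangle,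
    incidenceMatrix triangleEnds, orientationIncidence triangleEnds {0},
    orientationLaplacian triangleEnds {0}, z, _, rigidityMatrix triangleEnds triangle, pbar,
    hends, rfl, fun _ _ => rfl, fun _ => rfl, rfl, rfl, rfl, fun _ => rfl,
    rank_rigidityMatrix_triangle, ?_, fun h => hactive (by rw [h, mulVec_zero]), hactive⟩
  funext k
  exact sub_eq_zero.2 (Real.sq_sqrt (by positivity)).symm
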